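/- arXiv:2111.04783 — 3 statements merged into one kernel-verified Lean document; each statement's English description precedes it below -/
import Mathlib

section
/- Let X be a nonnegative real random variable whose law has a density (so that P(X = 0) = 0), with cumulative distribution function F(t) = P(X ≤ t), and let p > 0, q > 0. Then the average symbol error probability E[p · Q(√(2 q X))] equals (p √q / (2 √π)) ∫₀^∞ e^{-q t} t^{-1/2} F(t) dt, where Q(x) = (1/√(2π)) ∫_x^∞ e^{-s²/2} ds is the Gaussian Q-function. -/
/-! The substitution `s = √(2 q t)` turns `Q(√(2 q x))` into
`√q / (2 √π) ∫_{t > x} e^{-q t} t^{-1/2} dt`, so the average error probability is a double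
integral over `{x < t}`. Tonelli swaps the two integrations, which weights `e^{-q t} t^{-1/2}` by
`P(X < t)`; this equals `F(t)` because a law with a density has no atoms. -/

open MeasureTheory Real Set
open scoped ENNReal

noncomputable def gaussQ (x : ℝ) : ℝ :=
  (1 / Real.sqrt (2 * π)) * ∫ s in Set.Ioi x, Real.exp (-s ^ 2 / 2)

lemma integrable_exp_neg_sq_div_two : Integrable fun s : ℝ => exp (-s ^ 2 / 2) := by
  convert integrable_exp_neg_mul_sq (by norm_num : (0 : ℝ) < 1 / 2) using 2 with s
  ring_nf

lemma gaussQ_antitone : Antitone gaussQ := fun a b hab => by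
  refine mul_le_mul_of_nonneg_left ?_ (by positivity)
  exact setIntegral_mono_set integrable_exp_neg_sq_div_two.integrableOn
    (ae_of_all _ fun s => (exp_pos _).le) (Ioi_subset_Ioi hab).eventuallyLE

lemma integrableOn_exp_neg_mul_mul_rpow_neg_half {q : ℝ} (hq : 0 < q) :
    IntegrableOn (fun t => exp (-q * t) * t ^ (-(1 : ℝ) / 2)) (Ioi 0) := by
  refine (integrableOn_rpow_mul_exp_neg_mul_rpow (p := 1) (s := -(1 : ℝ) / 2) (by norm_num)
    one_pos hq).congr_fun (fun t _ => ?_) measurableSet_Ioi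
  simp only [rpow_one, mul_comm]

lemma hasDerivAt_sqrt_two_mul {q t : ℝ} (hq : 0 < q) (ht : 0 < t) :
    HasDerivAt (fun t => √(2 * q * t)) (√q / √2 * t ^ (-(1 : ℝ) / 2)) t := by
  convert ((hasDerivAt_id' t).const_mul (2 * q)).sqrt (by positivity) using 1
  rw [neg_div, rpow_neg ht.le, ← sqrt_eq_rpow, sqrt_mul (by positivity), sqrt_mul zero_le_two]
  have := sq_sqrt hq.le
  field_simp
  linear_combination this

theorem gaussQ_sqrt_two_mul_eq_integral {q x : ℝ} (hq : 0 < q) (hx : 0 ≤ x) :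
    gaussQ √(2 * q * x) =
      √q / (2 * √π) * ∫ t in Ioi x, exp (-q * t) * t ^ (-(1 : ℝ) / 2) := by
  have hcomp : ∀ t ∈ Ioi x,
      exp (-√(2 * q * t) ^ 2 / 2) * (√q / √2 * t ^ (-(1 : ℝ) / 2)) =
        √q / √2 * (exp (-q * t) * t ^ (-(1 : ℝ) / 2)) := fun t ht => by
    rw [sq_sqrt (by nlinarith [mem_Ioi.mp ht])]
    ring_nf
  have hsub := integral_comp_mul_deriv_Ioi (f := fun t => √(2 * q * t))
    (g := fun s => exp (-s ^ 2 / 2))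
    (f' := fun t => √q / √2 * t ^ (-(1 : ℝ) / 2)) (by fun_prop)
    (tendsto_sqrt_atTop.comp (Filter.tendsto_id.const_mul_atTop (by positivity)))
    (fun t ht => (hasDerivAt_sqrt_two_mul hq (hx.trans_lt ht)).hasDerivWithinAt)
    (by fun_prop) integrable_exp_neg_sq_div_two.integrableOn <| by
      rw [integrableOn_Ici_iff_integrableOn_Ioi]
      refine IntegrableOn.congr_fun ?_ (fun t ht => (hcomp t ht).symm) measurableSet_Ioi
      exact ((integrableOn_exp_neg_mul_mul_rpow_neg_half hq).mono_set
        (Ioi_subset_Ioi hx)).const_mul _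
  simp only [Function.comp_apply] at hsub
  rw [gaussQ, ← hsub, setIntegral_congr_fun measurableSet_Ioi hcomp, integral_const_mul,
    sqrt_mul zero_le_two, ← mul_assoc]
  congr 1
  field_simp
  exact (sq_sqrt zero_le_two).symm

theorem lintegral_setLIntegral_Ioi_eq {μ : Measure ℝ} [SFinite μ] {G : ℝ → ℝ≥0∞}
    (hG : Measurable G) :
    ∫⁻ x, (∫⁻ t in Ioi x, G t) ∂μ = ∫⁻ t, G t * μ (Iio t) := by
  have hswap : ∀ x t, (Ioi x).indicator G t = (Iio t).indicator (fun _ => G t) x := fun _ _ => rfl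
  calc ∫⁻ x, (∫⁻ t in Ioi x, G t) ∂μ
    _ = ∫⁻ x, (∫⁻ t, (Iio t).indicator (fun _ => G t) x) ∂μ := by
        simp_rw [← hswap, lintegral_indicator measurableSet_Ioi]
    _ = ∫⁻ t, ∫⁻ x, (Iio t).indicator (fun _ => G t) x ∂μ :=
        lintegral_lintegral_swap (Measurable.aemeasurable <| show Measurable
          ({z : ℝ × ℝ | z.1 < z.2}.indicator (G ∘ Prod.snd)) from
            (hG.comp measurable_snd).indicator (measurableSet_lt measurable_fst measurable_snd))
    _ = ∫⁻ t, G t * μ (Iio t) := by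
        simp_rw [lintegral_indicator measurableSet_Iio, setLIntegral_const]

theorem integral_setIntegral_Ioi_eq {μ : Measure ℝ} [IsFiniteMeasure μ]
    (hμ : ∀ᵐ x ∂μ, 0 ≤ x) {G : ℝ → ℝ} (hG : Measurable G) (hG0 : ∀ t, 0 < t → 0 ≤ G t)
    (hGi : IntegrableOn G (Ioi 0)) :
    ∫ x, (∫ t in Ioi x, G t) ∂μ = ∫ t in Ioi 0, G t * (μ (Iio t)).toReal := by
  have hinner :
      ∀ᵐ x ∂μ, ∫ t in Ioi x, G t = (∫⁻ t in Ioi x, .ofReal (G t)).toReal := by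
    filter_upwards [hμ] with x hx
    refine integral_eq_lintegral_of_nonneg_ae ?_ hG.aestronglyMeasurable
    filter_upwards [ae_restrict_mem measurableSet_Ioi] with t ht using hG0 t (hx.trans_lt ht)
  have hfinite : ∀ᵐ x ∂μ, ∫⁻ t in Ioi x, .ofReal (G t) < ∞ := by
    filter_upwards [hμ] with x hx
    exact (lintegral_mono_set (Ioi_subset_Ioi hx)).trans_lt hGi.lintegral_lt_top
  have hnull : ∀ t ≤ 0, μ (Iio t) = 0 := fun t ht =>
    measure_mono_null (fun x hx => not_le.mpr (lt_of_lt_of_le hx ht)) (ae_iff.mp hμ)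
  have hF : Monotone fun t => μ (Iio t) := fun s t hst => measure_mono (Iio_subset_Iio hst)
  have htail : Antitone fun x => ∫⁻ t in Ioi x, .ofReal (G t) := fun a b hab =>
    lintegral_mono_set (Ioi_subset_Ioi hab)
  calc ∫ x, (∫ t in Ioi x, G t) ∂μ
    _ = ∫ x, (∫⁻ t in Ioi x, .ofReal (G t)).toReal ∂μ :=
        integral_congr_ae hinner
    _ = (∫⁻ x, (∫⁻ t in Ioi x, .ofReal (G t)) ∂μ).toReal :=
        integral_toReal htail.measurable.aemeasurable hfinite
    _ = (∫⁻ t in Ioi 0, .ofReal (G t * (μ (Iio t)).toReal)).toReal := by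
        rw [lintegral_setLIntegral_Ioi_eq hG.ennreal_ofReal,
          ← setLIntegral_eq_of_support_subset]
        · refine congrArg _ (setLIntegral_congr_fun measurableSet_Ioi fun t ht => ?_)
          rw [ENNReal.ofReal_mul (hG0 t ht), ENNReal.ofReal_toReal (measure_ne_top μ _)]
        · refine Function.support_subset_iff'.2 fun t ht => ?_
          rw [hnull t (not_lt.mp ht), mul_zero]
    _ = ∫ t in Ioi 0, G t * (μ (Iio t)).toReal := by
        refine (integral_eq_lintegral_of_nonneg_ae ?_ ?_).symm
        · filter_upwards [ae_restrict_mem measurableSet_Ioi] with t ht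
          exact mul_nonneg (hG0 t ht) ENNReal.toReal_nonneg
        · exact (hG.mul hF.measurable.ennreal_toReal).aestronglyMeasurable

theorem asep_cdf_form_general
    {Ω : Type*} [MeasurableSpace Ω] (P : Measure Ω) [IsProbabilityMeasure P]
    (X : Ω → ℝ) (hXmeas : Measurable X) (hXnn : ∀ ω, 0 ≤ X ω)
    (f : ℝ → ℝ≥0∞)
    (hlaw : Measure.map X P = volume.withDensity f)
    (p q : ℝ) (hq : 0 < q) :
    (∫ ω, p * gaussQ (Real.sqrt (2 * q * X ω)) ∂P) =
      (p * Real.sqrt q / (2 * Real.sqrt π)) *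
        ∫ t in Set.Ioi (0 : ℝ),
          Real.exp (-q * t) * t ^ (-(1 : ℝ) / 2) * (P {ω | X ω ≤ t}).toReal := by
  set μ := P.map X
  have hμ : ∀ᵐ x ∂μ, 0 ≤ x :=
    (ae_map_iff hXmeas.aemeasurable measurableSet_Ici).2 (ae_of_all _ hXnn)
  have hcdf : ∀ t, P {ω | X ω ≤ t} = μ (Iio t) := fun t => by
    rw [measure_congr (hlaw ▸ Iio_ae_eq_Iic : Iio t =ᵐ[μ] Iic t),
      Measure.map_apply hXmeas measurableSet_Iic]
    rfl
  have hQ : Measurable fun x => gaussQ √(2 * q * x) :=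
    gaussQ_antitone.measurable.comp (by fun_prop)
  calc (∫ ω, p * gaussQ √(2 * q * X ω) ∂P) = p * ∫ x, gaussQ √(2 * q * x) ∂μ := by
        rw [integral_const_mul, integral_map hXmeas.aemeasurable hQ.aestronglyMeasurable]
    _ = p * ∫ x, √q / (2 * √π) *
          (∫ t in Ioi x, exp (-q * t) * t ^ (-(1 : ℝ) / 2)) ∂μ := by
        congr 1
        exact integral_congr_ae (hμ.mono fun x hx => gaussQ_sqrt_two_mul_eq_integral hq hx)
    _ = _ := by
        rw [integral_const_mul, integral_setIntegral_Ioi_eq hμ (by fun_prop)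
          (fun t ht => by positivity) (integrableOn_exp_neg_mul_mul_rpow_neg_half hq)]
        simp_rw [hcdf]
        ring

/-- For a nonnegative random variable `X` whose law has a density,
with CDF `F(t) = P(X ≤ t)`, and constants `p, q > 0`, the average symbol error
probability satisfies
`E[p Q(√(2 q X))] = (p √q / (2 √π)) ∫₀^∞ e^(-q t) t^(-1/2) F(t) dt`. -/
theorem asep_cdf_form
    {Ω : Type*} [MeasurableSpace Ω] (P : Measure Ω) [IsProbabilityMeasure P]
    (X : Ω → ℝ) (hXmeas : Measurable X) (hXnn : ∀ ω, 0 ≤ X ω)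
    (f : ℝ → ℝ≥0∞) (hfmeas : Measurable f)
    (hlaw : Measure.map X P = volume.withDensity f)
    (p q : ℝ) (hp : 0 < p) (hq : 0 < q) :
    (∫ ω, p * gaussQ (Real.sqrt (2 * q * X ω)) ∂P) =
      (p * Real.sqrt q / (2 * Real.sqrt π)) *
        ∫ t in Set.Ioi (0 : ℝ),
          Real.exp (-q * t) * t ^ (-(1 : ℝ) / 2) * (P {ω | X ω ≤ t}).toReal :=
  asep_cdf_form_general P X hXmeas hXnn f hlaw p q hq
end

section
/- Let a > -1 and b > 0, and for γ̄ > 0 define the ergodic capacity without CSI as Ĉ(γ̄) = (1/(ln 2 · Γ(a+1))) ∫₀^∞ u^a e^{-u} ln(1 + γ̄ b² u²) du. Then in the low-SNR regime, lim_{γ̄ → 0⁺} Ĉ(γ̄)/γ̄ = 2^{a+2} b² Γ((a+3)/2) Γ((a+4)/2) / (ln 2 · √π · Γ(a+1)); in particular, the ergodic capacity without CSI varies linearly with the average SNR γ̄ as γ̄ → 0. -/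
open MeasureTheory Real Set Filter

/-- With `a > -1`, `b > 0`, the ergodic capacity without CSI
`Ĉ(γ̄) = (1/(ln 2 · Γ(a+1))) ∫₀^∞ u^a e^(-u) ln(1 + γ̄ b² u²) du` satisfies, in the
low-SNR regime,
`lim_{γ̄ → 0⁺} Ĉ(γ̄)/γ̄ = 2^(a+2) b² Γ((a+3)/2) Γ((a+4)/2) / (ln 2 · √π · Γ(a+1))`,
i.e. the capacity varies linearly with the average SNR `γ̄` as `γ̄ → 0⁺`. -/
theorem ergodic_capacity_no_csi_low_snr
    (a b : ℝ) (ha : -1 < a) (hb : 0 < b) :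
    Tendsto
      (fun γbar : ℝ =>
        ((1 / (Real.log 2 * Real.Gamma (a + 1))) *
          ∫ u in Set.Ioi (0 : ℝ),
            u ^ a * Real.exp (-u) * Real.log (1 + γbar * b ^ 2 * u ^ 2)) / γbar)
      (nhdsWithin 0 (Set.Ioi 0))
      (nhds ((2 : ℝ) ^ (a + 2) * b ^ 2 * Real.Gamma ((a + 3) / 2) *
        Real.Gamma ((a + 4) / 2) / (Real.log 2 * Real.sqrt π * Real.Gamma (a + 1)))) := by
  have hπ : (0:ℝ) < Real.sqrt π := Real.sqrt_pos.2 Real.pi_pos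
  have hΓ : 0 < Real.Gamma (a + 1) := Real.Gamma_pos_of_pos (by linarith)
  have hl2 : (0:ℝ) < Real.log 2 := Real.log_pos (by norm_num)
  set C : ℝ := 1 / (Real.log 2 * Real.Gamma (a + 1)) with hC
  have hconst : (2 : ℝ) ^ (a + 2) * b ^ 2 * Real.Gamma ((a + 3) / 2) *
        Real.Gamma ((a + 4) / 2) / (Real.log 2 * Real.sqrt π * Real.Gamma (a + 1))
      = C * (b ^ 2 * Real.Gamma (a + 3)) := by
    have h := Real.Gamma_mul_Gamma_add_half ((a + 3) / 2)
    have h2 : (a + 3) / 2 + 1 / 2 = (a + 4) / 2 := by ring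
    have h3 : 2 * ((a + 3) / 2) = a + 3 := by ring
    rw [h2, h3] at h
    have hpow : (2 : ℝ) ^ (a + 2) * (2 : ℝ) ^ (1 - (a + 3)) = 1 := by
      rw [← Real.rpow_add (by norm_num : (0:ℝ) < 2),
        show a + 2 + (1 - (a + 3)) = 0 by ring, Real.rpow_zero]
    have key : (2 : ℝ) ^ (a + 2) * (Real.Gamma ((a + 3) / 2) * Real.Gamma ((a + 4) / 2))
        = Real.Gamma (a + 3) * Real.sqrt π := by
      rw [h, show (2:ℝ) ^ (a+2) * (Real.Gamma (a+3) * 2 ^ (1 - (a+3)) * Real.sqrt π)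
          = ((2:ℝ) ^ (a+2) * 2 ^ (1 - (a+3))) * (Real.Gamma (a+3) * Real.sqrt π) from by ring,
        hpow, one_mul]
    have hnum : (2:ℝ) ^ (a + 2) * b ^ 2 * Real.Gamma ((a + 3) / 2) * Real.Gamma ((a + 4) / 2)
        = b ^ 2 * Real.Gamma (a + 3) * Real.sqrt π := by
      linear_combination b ^ 2 * key
    rw [hnum, hC]
    field_simp
  rw [hconst]
  set f : ℝ → ℝ := fun u => b ^ 2 * (Real.exp (-u) * u ^ (a + 2)) with hf
  have hint_f : ∫ u in Set.Ioi (0:ℝ), f u = b ^ 2 * Real.Gamma (a + 3) := by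
    rw [hf, MeasureTheory.integral_const_mul]
    congr 1
    rw [Real.Gamma_eq_integral (by linarith : (0:ℝ) < a + 3)]
    simp only [show a + 3 - 1 = a + 2 from by ring]
  set F : ℝ → ℝ → ℝ := fun γ u =>
    u ^ a * Real.exp (-u) * Real.log (1 + γ * b ^ 2 * u ^ 2) / γ with hF
  have key : Tendsto (fun γ => ∫ u in Set.Ioi (0:ℝ), F γ u)
      (nhdsWithin 0 (Set.Ioi 0)) (nhds (b ^ 2 * Real.Gamma (a + 3))) := by
    rw [← hint_f]
    apply MeasureTheory.tendsto_integral_filter_of_dominated_convergence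
      (fun u => b ^ 2 * (Real.exp (-u) * u ^ (a + 2)))
    · filter_upwards [self_mem_nhdsWithin] with γ (hγ : (0:ℝ) < γ)
      apply ContinuousOn.aestronglyMeasurable ?_ measurableSet_Ioi
      intro u hu
      have hu' : (0:ℝ) < u := hu
      apply ContinuousWithinAt.div_const
      apply ContinuousWithinAt.mul
      apply ContinuousWithinAt.mul
      · exact (Real.continuousAt_rpow_const u a (Or.inl hu'.ne')).continuousWithinAt
      · exact (Real.continuous_exp.comp continuous_neg).continuousAt.continuousWithinAt
      · have harg : (0:ℝ) < 1 + γ * b ^ 2 * u ^ 2 := by positivity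
        have hinner : ContinuousAt (fun x : ℝ => 1 + γ * b ^ 2 * x ^ 2) u := by fun_prop
        exact (hinner.log harg.ne').continuousWithinAt
    · filter_upwards [self_mem_nhdsWithin] with γ (hγ : (0:ℝ) < γ)
      filter_upwards [ae_restrict_mem measurableSet_Ioi] with u (hu : 0 < u)
      have h1 : (0:ℝ) ≤ γ * b ^ 2 * u ^ 2 := by positivity
      have hlog0 : 0 ≤ Real.log (1 + γ * b ^ 2 * u ^ 2) :=
        Real.log_nonneg (by linarith)
      have hlog : Real.log (1 + γ * b ^ 2 * u ^ 2) ≤ γ * b ^ 2 * u ^ 2 := by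
        have := Real.log_le_sub_one_of_pos (show (0:ℝ) < 1 + γ * b ^ 2 * u ^ 2 by linarith)
        linarith
      have hua : (0:ℝ) ≤ u ^ a := le_of_lt (Real.rpow_pos_of_pos hu a)
      have hFnn : 0 ≤ F γ u := by
        simp only [hF]
        positivity
      rw [Real.norm_eq_abs, abs_of_nonneg hFnn]
      simp only [hF]
      have hupow : u ^ a * u ^ 2 = u ^ (a + 2) := by
        rw [show u ^ 2 = u ^ ((2:ℕ):ℝ) by rw [Real.rpow_natCast],
          ← Real.rpow_add hu]
        norm_num
      calc u ^ a * Real.exp (-u) * Real.log (1 + γ * b ^ 2 * u ^ 2) / γ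
          ≤ u ^ a * Real.exp (-u) * (γ * b ^ 2 * u ^ 2) / γ := by
            apply div_le_div_of_nonneg_right ?_ hγ.le
            exact mul_le_mul_of_nonneg_left hlog
              (mul_nonneg hua (Real.exp_nonneg _))
        _ = b ^ 2 * (Real.exp (-u) * (u ^ a * u ^ 2)) := by
            field_simp
        _ = b ^ 2 * (Real.exp (-u) * u ^ (a + 2)) := by rw [hupow]
    · exact ((Real.GammaIntegral_convergent (by linarith : (0:ℝ) < a + 3)).congr
        (by filter_upwards with u;
            simp only [show a + 3 - 1 = a + 2 from by ring])).const_mul (b ^ 2)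
    · filter_upwards [ae_restrict_mem measurableSet_Ioi] with u (hu : 0 < u)
      set c : ℝ := b ^ 2 * u ^ 2 with hc
      have hc0 : 0 < c := by positivity
      have hupow : u ^ a * u ^ 2 = u ^ (a + 2) := by
        rw [show u ^ 2 = u ^ ((2:ℕ):ℝ) by rw [Real.rpow_natCast],
          ← Real.rpow_add hu]
        norm_num
      have hd : HasDerivAt (fun γ : ℝ => Real.log (1 + γ * c)) c 0 := by
        have h1 : HasDerivAt (fun γ : ℝ => 1 + γ * c) c 0 := by
          simpa using ((hasDerivAt_id (0:ℝ)).mul_const c).const_add 1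
        have := h1.log (by norm_num)
        simpa using this
      have hslope : Tendsto (fun γ : ℝ => Real.log (1 + γ * c) / γ)
          (nhdsWithin 0 (Set.Ioi 0)) (nhds c) := by
        have h1 := hasDerivAt_iff_tendsto_slope.1 hd
        have h2 : Tendsto (slope (fun γ : ℝ => Real.log (1 + γ * c)) 0)
            (nhdsWithin 0 (Set.Ioi 0)) (nhds c) :=
          h1.mono_left (nhdsWithin_mono _ (fun x hx => ne_of_gt hx))
        refine h2.congr (fun γ => ?_)
        simp [slope, Real.log_one, div_eq_inv_mul]
      have hT := hslope.const_mul (u ^ a * Real.exp (-u))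
      have heq : ∀ γ : ℝ, u ^ a * Real.exp (-u) * (Real.log (1 + γ * c) / γ) = F γ u := by
        intro γ
        simp only [hF, hc]
        ring
      have hval : u ^ a * Real.exp (-u) * c = f u := by
        simp only [hf, hc]
        rw [← hupow]; ring
      rw [← hval]
      exact hT.congr heq
  have final := key.const_mul C
  refine final.congr' ?_
  filter_upwards [self_mem_nhdsWithin] with γ (hγ : (0:ℝ) < γ)
  simp only [hF]
  rw [MeasureTheory.integral_div, mul_div_assoc]
end

section
/- Let a > -1, b > 0, γ̄ > 0 and γ₀ > 0, and let f_γ(t) = t^{(a-1)/2} exp(-√t/(b√γ̄)) / (2 b^{a+1} Γ(a+1) γ̄^{(a+1)/2}) for t > 0 be the density of the end-to-end SNR. Then the ergodic capacity with full CSI and water-filling cutoff γ₀ satisfies C = (1/ln 2) ∫_{γ₀}^∞ ln(t/γ₀) f_γ(t) dt = (2/(ln 2 · Γ(a+1))) ∫_{u₀}^∞ u^a e^{-u} ln(u/u₀) du, where u₀ = √γ₀/(b√γ̄), and both integrals are finite. -/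
/-!
The substitution `t = b² γ̄ u²` (i.e. `u = √t / (b √γ̄)`) turns `f_γ(t) dt` into
`u ^ a e^(-u) du / Γ(a + 1)` and `ln (t / γ₀)` into `2 ln (u / u₀)`. Integrability on `(u₀, ∞)`
follows from `ln x ≤ x`, which bounds the integrand by a multiple of the Gamma integrand
`u ^ (a + 1) e^(-u)`.
-/

open MeasureTheory Real Set

section QuadraticSubstitution

variable {E : Type*} [NormedAddCommGroup E] [NormedSpace ℝ E] {k x₀ : ℝ}

theorem image_mul_sq_Ioi (hk : 0 < k) (hx₀ : 0 ≤ x₀) :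
    (fun x => k * x ^ 2) '' Ioi x₀ = Ioi (k * x₀ ^ 2) := by
  ext t
  constructor
  · rintro ⟨x, hx, rfl⟩
    have hx : x₀ < x := hx
    exact mul_lt_mul_of_pos_left (pow_lt_pow_left₀ hx hx₀ two_ne_zero) hk
  · intro ht
    have ht : k * x₀ ^ 2 < t := ht
    have ht₀ : 0 ≤ t / k := div_nonneg ((by positivity : 0 ≤ k * x₀ ^ 2).trans ht.le) hk.le
    refine ⟨√(t / k), ?_, ?_⟩
    · exact lt_sqrt_of_sq_lt ((lt_div_iff₀' hk).2 ht)
    · simp only [sq_sqrt ht₀]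
      field_simp

theorem injOn_mul_sq_Ioi (hk : k ≠ 0) (hx₀ : 0 ≤ x₀) :
    InjOn (fun x => k * x ^ 2) (Ioi x₀) := fun _ hx _ hy hxy =>
  (sq_eq_sq₀ (hx₀.trans (le_of_lt hx)) (hx₀.trans (le_of_lt hy))).1 (mul_left_cancel₀ hk hxy)

theorem hasDerivAt_mul_sq (k x : ℝ) : HasDerivAt (fun x => k * x ^ 2) (2 * k * x) x := by
  simpa [mul_comm, mul_left_comm, mul_assoc] using (hasDerivAt_pow 2 x).const_mul k

theorem abs_deriv_smul_eqOn_mul_sq (g : ℝ → E) (hk : 0 < k) (hx₀ : 0 ≤ x₀) :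
    EqOn (fun x => |2 * k * x| • g (k * x ^ 2)) (fun x => (2 * k * x) • g (k * x ^ 2))
      (Ioi x₀) := fun x hx => by
  have hx : 0 < x := hx₀.trans_lt hx
  simp only [abs_of_pos (by positivity : 0 < 2 * k * x)]

theorem integrableOn_Ioi_mul_sq_iff (g : ℝ → E) (hk : 0 < k) (hx₀ : 0 ≤ x₀) :
    IntegrableOn g (Ioi (k * x₀ ^ 2)) ↔
      IntegrableOn (fun x => (2 * k * x) • g (k * x ^ 2)) (Ioi x₀) := by
  rw [← image_mul_sq_Ioi hk hx₀, integrableOn_image_iff_integrableOn_abs_deriv_smul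
    measurableSet_Ioi (fun x _ => (hasDerivAt_mul_sq k x).hasDerivWithinAt)
    (injOn_mul_sq_Ioi hk.ne' hx₀)]
  exact integrableOn_congr_fun (abs_deriv_smul_eqOn_mul_sq g hk hx₀) measurableSet_Ioi

theorem integral_Ioi_mul_sq (g : ℝ → E) (hk : 0 < k) (hx₀ : 0 ≤ x₀) :
    ∫ t in Ioi (k * x₀ ^ 2), g t = ∫ x in Ioi x₀, (2 * k * x) • g (k * x ^ 2) := by
  rw [← image_mul_sq_Ioi hk hx₀, integral_image_eq_integral_abs_deriv_smul
    measurableSet_Ioi (fun x _ => (hasDerivAt_mul_sq k x).hasDerivWithinAt)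
    (injOn_mul_sq_Ioi hk.ne' hx₀)]
  exact setIntegral_congr_fun measurableSet_Ioi (abs_deriv_smul_eqOn_mul_sq g hk hx₀)

end QuadraticSubstitution

theorem integrableOn_Ioi_rpow_mul_exp_neg_mul_log_div {a u₀ : ℝ} (ha : -2 < a) (hu₀ : 0 < u₀) :
    IntegrableOn (fun u => u ^ a * exp (-u) * log (u / u₀)) (Ioi u₀) := by
  have hmajorant : IntegrableOn (fun u => u₀⁻¹ * (exp (-u) * u ^ (a + 1))) (Ioi u₀) := by
    have h := (GammaIntegral_convergent (by linarith : 0 < a + 2)).mono_set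
      (Ioi_subset_Ioi hu₀.le)
    rw [show a + 2 - 1 = a + 1 by ring] at h
    exact h.const_mul _
  refine hmajorant.mono' ?_ ?_
  · refine ContinuousOn.aestronglyMeasurable (fun u hu => ?_) measurableSet_Ioi
    have hu : 0 < u := hu₀.trans hu
    exact (((continuousAt_id.rpow_const (Or.inl hu.ne')).mul
      (continuous_exp.comp continuous_neg).continuousAt).mul
      ((continuousAt_id.div_const u₀).log (div_pos hu hu₀).ne')).continuousWithinAt
  · filter_upwards [ae_restrict_mem measurableSet_Ioi] with u hu
    have hu' : 0 < u := hu₀.trans hu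
    have hlog : 0 ≤ log (u / u₀) := log_nonneg ((one_le_div hu₀).2 hu.le)
    rw [norm_of_nonneg (by positivity)]
    calc u ^ a * exp (-u) * log (u / u₀)
        ≤ u ^ a * exp (-u) * (u / u₀) := by gcongr; exact log_le_self (by positivity)
      _ = u₀⁻¹ * (exp (-u) * u ^ (a + 1)) := by rw [rpow_add_one hu'.ne']; ring

noncomputable def snrDensity (a b γbar t : ℝ) : ℝ :=
  t ^ ((a - 1) / 2) * exp (-√t / (b * √γbar)) /
    (2 * b ^ (a + 1) * Gamma (a + 1) * γbar ^ ((a + 1) / 2))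

theorem mul_snrDensity_mul_sq {a b γbar u : ℝ} (hb : 0 < b) (hγbar : 0 < γbar) (hu : 0 < u) :
    2 * (b ^ 2 * γbar) * u * snrDensity a b γbar (b ^ 2 * γbar * u ^ 2) =
      u ^ a * exp (-u) / Gamma (a + 1) := by
  set c := b * √γbar
  have hc : 0 < c := by positivity
  have hc2 : b ^ 2 * γbar = c ^ 2 := by rw [mul_pow, sq_sqrt hγbar.le]
  have hsq : b ^ 2 * γbar * u ^ 2 = (c * u) ^ 2 := by rw [hc2]; ring
  have hpow : (b ^ 2 * γbar * u ^ 2) ^ ((a - 1) / 2) = c ^ (a - 1) * u ^ (a - 1) := by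
    rw [hsq, ← rpow_natCast, ← rpow_mul (by positivity), mul_rpow hc.le hu.le]
    norm_num [mul_div_cancel₀]
  have hden : b ^ (a + 1) * γbar ^ ((a + 1) / 2) = c ^ (a + 1) := by
    rw [mul_rpow hb.le (sqrt_nonneg _), sqrt_eq_rpow, ← rpow_mul hγbar.le]
    ring_nf
  have hca : c ^ (a + 1) = c ^ (a - 1) * c ^ 2 := by
    rw [← rpow_natCast, ← rpow_add hc]; ring_nf
  have hua : u ^ a = u ^ (a - 1) * u := by
    rw [← rpow_add_one hu.ne']; norm_num
  unfold snrDensity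
  rw [hpow, hsq, sqrt_sq (by positivity), neg_div, mul_div_cancel_left₀ u hc.ne',
    show 2 * b ^ (a + 1) * Gamma (a + 1) * γbar ^ ((a + 1) / 2) = 2 * c ^ (a + 1) * Gamma (a + 1)
      by rw [← hden]; ring, hc2, hca, hua]
  field_simp

/-- With `a > -1`, `b > 0`, `γ̄ > 0` and water-filling cutoff `γ₀ > 0`,
the ergodic capacity with full CSI against the SNR density
`f_γ(t) = t^((a-1)/2) exp(-√t/(b√γ̄)) / (2 b^(a+1) Γ(a+1) γ̄^((a+1)/2))` satisfies
`(1/ln 2) ∫_{γ₀}^∞ ln(t/γ₀) f_γ(t) dt = (2/(ln 2 · Γ(a+1))) ∫_{u₀}^∞ u^a e^(-u) ln(u/u₀) du`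
with `u₀ = √γ₀/(b√γ̄)`, and both integrals are finite. -/
theorem ergodic_capacity_with_csi
    (a b γbar γ₀ : ℝ) (ha : -1 < a) (hb : 0 < b) (hγbar : 0 < γbar) (hγ₀ : 0 < γ₀) :
    IntegrableOn (fun t =>
        Real.log (t / γ₀) *
          (t ^ ((a - 1) / 2) * Real.exp (-Real.sqrt t / (b * Real.sqrt γbar)) /
            (2 * b ^ (a + 1) * Real.Gamma (a + 1) * γbar ^ ((a + 1) / 2))))
      (Set.Ioi γ₀) volume ∧
    IntegrableOn (fun u =>
        u ^ a * Real.exp (-u) * Real.log (u / (Real.sqrt γ₀ / (b * Real.sqrt γbar))))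
      (Set.Ioi (Real.sqrt γ₀ / (b * Real.sqrt γbar))) volume ∧
    (1 / Real.log 2) *
        (∫ t in Set.Ioi γ₀,
          Real.log (t / γ₀) *
            (t ^ ((a - 1) / 2) * Real.exp (-Real.sqrt t / (b * Real.sqrt γbar)) /
              (2 * b ^ (a + 1) * Real.Gamma (a + 1) * γbar ^ ((a + 1) / 2)))) =
      (2 / (Real.log 2 * Real.Gamma (a + 1))) *
        ∫ u in Set.Ioi (Real.sqrt γ₀ / (b * Real.sqrt γbar)),
          u ^ a * Real.exp (-u) * Real.log (u / (Real.sqrt γ₀ / (b * Real.sqrt γbar))) := by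
  set u₀ := √γ₀ / (b * √γbar) with hu₀_def
  set k := b ^ 2 * γbar with hk_def
  have hk : 0 < k := by positivity
  have hu₀ : 0 < u₀ := by positivity
  have hγ₀_eq : k * u₀ ^ 2 = γ₀ := by
    rw [hk_def, hu₀_def, div_pow, mul_pow, sq_sqrt hγ₀.le, sq_sqrt hγbar.le]
    field_simp
  have hintegrand : EqOn
      (fun u => (2 * k * u) • (log (k * u ^ 2 / γ₀) * snrDensity a b γbar (k * u ^ 2)))
      (fun u => 2 / Gamma (a + 1) * (u ^ a * exp (-u) * log (u / u₀))) (Ioi u₀) := by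
    intro u hu
    have hlog : log (k * u ^ 2 / γ₀) = 2 * log (u / u₀) := by
      rw [← hγ₀_eq, mul_div_mul_left _ _ hk.ne', ← div_pow, log_pow, Nat.cast_ofNat]
    have hdensity := mul_snrDensity_mul_sq (a := a) hb hγbar (hu₀.trans hu)
    simp only [smul_eq_mul, hlog]
    linear_combination (2 * log (u / u₀)) * hdensity
  have hint := integrableOn_Ioi_rpow_mul_exp_neg_mul_log_div (a := a) (by linarith) hu₀
  have hsubst := integral_Ioi_mul_sq (fun t => log (t / γ₀) * snrDensity a b γbar t) hk hu₀.le
  have hsubst_int := integrableOn_Ioi_mul_sq_iff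
    (fun t => log (t / γ₀) * snrDensity a b γbar t) hk hu₀.le
  rw [hγ₀_eq] at hsubst hsubst_int
  refine ⟨hsubst_int.2 (IntegrableOn.congr_fun (hint.const_mul _) hintegrand.symm
    measurableSet_Ioi), hint, ?_⟩
  change 1 / log 2 * ∫ t in Ioi γ₀, log (t / γ₀) * snrDensity a b γbar t = _
  rw [hsubst, setIntegral_congr_fun measurableSet_Ioi hintegrand, integral_const_mul]
  ring
end
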